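/- Let X be a strongly zero-dimensional topological space and Y a metrizable space. Then K₁(X,Y) ∩ Σ^f(X,Y) = B₁(X,Y); that is, a map f : X → Y is a pointwise limit of continuous maps if and only if the preimage of every open set is a functionally F_σ-set and f has a σ-strongly-functionally-discrete base. -/

import Mathlib

open Set Filter Topology

def IsZeroSet {X : Type*} [TopologicalSpace X] (A : Set X) : Prop :=
  ∃ f : X → ℝ, Continuous f ∧ A = f ⁻¹' {0}

def IsCozeroSet {X : Type*} [TopologicalSpace X] (A : Set X) : Prop := IsZeroSet Aᶜ

def IsDiscreteFamily {X : Type*} [TopologicalSpace X] {ι : Type*} (U : ι → Set X) : Prop :=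
  ∀ x : X, ∃ V ∈ 𝓝 x, {i | (U i ∩ V).Nonempty}.Subsingleton

def IsSFDFamily {X : Type*} [TopologicalSpace X] {ι : Type*} (A : ι → Set X) : Prop :=
  ∃ U : ι → Set X, IsDiscreteFamily U ∧ (∀ i, IsCozeroSet (U i)) ∧ ∀ i, closure (A i) ⊆ U i

def IsSFDSetFamily {X : Type*} [TopologicalSpace X] (𝓐 : Set (Set X)) : Prop :=
  IsSFDFamily (fun A : 𝓐 => (A : Set X))

def IsBaseFor {X Y : Type*} [TopologicalSpace X] [TopologicalSpace Y]
    (𝓑 : Set (Set X)) (f : X → Y) : Prop :=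
  ∀ V : Set Y, IsOpen V → ∃ 𝓢 ⊆ 𝓑, f ⁻¹' V = ⋃₀ 𝓢

def FunctionallyFSigma {X : Type*} [TopologicalSpace X] (A : Set X) : Prop :=
  ∃ F : ℕ → Set X, (∀ n, IsZeroSet (F n)) ∧ A = ⋃ n, F n

def MemK1 {X Y : Type*} [TopologicalSpace X] [TopologicalSpace Y] (f : X → Y) : Prop :=
  ∀ V : Set Y, IsOpen V → FunctionallyFSigma (f ⁻¹' V)

def MemB1 {X Y : Type*} [TopologicalSpace X] [TopologicalSpace Y] (f : X → Y) : Prop :=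
  ∃ g : ℕ → X → Y, (∀ n, Continuous (g n)) ∧
    ∀ x, Tendsto (fun n => g n x) atTop (𝓝 (f x))

def MemSigmaF {X Y : Type*} [TopologicalSpace X] [TopologicalSpace Y] (f : X → Y) : Prop :=
  ∃ 𝓑 : ℕ → Set (Set X), (∀ n, IsSFDSetFamily (𝓑 n)) ∧ IsBaseFor (⋃ n, 𝓑 n) f

def MemSigmaF0 {X Y : Type*} [TopologicalSpace X] [TopologicalSpace Y] (f : X → Y) : Prop :=
  ∃ 𝓑 : ℕ → Set (Set X), (∀ n, IsSFDSetFamily (𝓑 n)) ∧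
    (∀ n, ∀ A ∈ 𝓑 n, IsZeroSet A) ∧ IsBaseFor (⋃ n, 𝓑 n) f

def CompletelySeparatedSets {X : Type*} [TopologicalSpace X] (A B : Set X) : Prop :=
  ∃ h : X → ℝ, Continuous h ∧ (∀ x, h x ∈ Icc (0:ℝ) 1) ∧
    (∀ x ∈ A, h x = 0) ∧ ∀ x ∈ B, h x = 1

def StronglyZeroDimensional (X : Type*) [TopologicalSpace X] : Prop :=
  ∀ A B : Set X, CompletelySeparatedSets A B → ∃ U : Set X, IsClopen U ∧ A ⊆ U ∧ U ⊆ Bᶜ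

def IsCSet {X : Type*} [TopologicalSpace X] (A : Set X) : Prop :=
  ∃ U : ℕ → Set X, (∀ n, IsClopen (U n)) ∧ A = ⋂ n, U n

def IsCSigmaSet {X : Type*} [TopologicalSpace X] (A : Set X) : Prop :=
  ∃ C : ℕ → Set X, (∀ n, IsCSet (C n)) ∧ A = ⋃ n, C n

def AlmostStronglyZeroDimensional (X : Type*) [TopologicalSpace X] : Prop :=
  ∀ A : Set X, IsZeroSet A → IsCSigmaSet A

def CountablyCompactIn {X : Type*} [TopologicalSpace X] (F : Set X) : Prop :=
  ∀ U : ℕ → Set X, (∀ n, IsOpen (U n)) → F ⊆ ⋃ n, U n →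
    ∃ s : Finset ℕ, F ⊆ ⋃ n ∈ s, U n

/-!
If continuous `g k` converge pointwise to `f`, then `f⁻¹ V` is the union, over closed `K ⊆ V`
that are neighbourhoods of the points of `V` and over `N`, of the zero sets
`{x | ∀ k ≥ N, g k x ∈ K}`; pulling a σ-discrete base of the metric space `Y` (Stone) back in the
same way gives a σ-strongly-functionally-discrete base of `f`.

Conversely, let `f ∈ K₁ ∩ Σ^f` and `ε > 0`. A member `A` of the base mapped into a ball
`B(y_A, ε)` lies in a discrete cozero set `U_A`, and `U_A ∩ f⁻¹ B(y_A, ε)` is a countable union of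
zero sets. Strong zero-dimensionality covers each of them by a decreasing sequence of clopen sets
that eventually avoids each of the countably many zero sets making up the complement of
`U_A ∩ f⁻¹ closedBall(y_A, ε)`. Taking at stage `k` the value `y_A` of the first clopen set that
contains a point gives continuous maps converging to a map `ε`-close to `f`. Finally, on a
strongly zero-dimensional space `B₁` is closed under uniform limits: if `g i k → F i` and `F i` is
`2⁻ⁱ`-close to `f`, follow at stage `k` the chain `g 0 k, g 1 k, …` as long as consecutive terms
are close, a condition that clopen sets decide.
-/

open Metric

section ZeroSets

variable {X Z : Type*} [TopologicalSpace X] [TopologicalSpace Z]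

theorem IsZeroSet.isClosed {A : Set X} (hA : IsZeroSet A) : IsClosed A := by
  obtain ⟨φ, hφ, rfl⟩ := hA
  exact isClosed_singleton.preimage hφ

theorem IsCozeroSet.isOpen {U : Set X} (hU : IsCozeroSet U) : IsOpen U :=
  isClosed_compl_iff.1 (IsZeroSet.isClosed hU)

theorem IsClosed.isZeroSet_preimage [PerfectlyNormalSpace Z] {K : Set Z} (hK : IsClosed K)
    {g : X → Z} (hg : Continuous g) : IsZeroSet (g ⁻¹' K) := by
  obtain ⟨φ, rfl, -⟩ := perfectlyNormalSpace_iff_forall_isClosed_preimage_zero.1 ‹_› K hK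
  exact ⟨φ ∘ g, φ.continuous.comp hg, rfl⟩

theorem IsOpen.isCozeroSet_preimage [PerfectlyNormalSpace Z] {V : Set Z} (hV : IsOpen V)
    {g : X → Z} (hg : Continuous g) : IsCozeroSet (g ⁻¹' V) :=
  hV.isClosed_compl.isZeroSet_preimage hg

theorem IsZeroSet.union {A B : Set X} (hA : IsZeroSet A) (hB : IsZeroSet B) :
    IsZeroSet (A ∪ B) := by
  obtain ⟨a, ha, rfl⟩ := hA
  obtain ⟨b, hb, rfl⟩ := hB
  exact ⟨a * b, ha.mul hb, by ext x; simp⟩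

theorem IsZeroSet.inter {A B : Set X} (hA : IsZeroSet A) (hB : IsZeroSet B) :
    IsZeroSet (A ∩ B) := by
  obtain ⟨a, ha, rfl⟩ := hA
  obtain ⟨b, hb, rfl⟩ := hB
  have : a ⁻¹' {0} ∩ b ⁻¹' {0} = (fun x => (a x, b x)) ⁻¹' {0} := by
    ext x; simp [Prod.ext_iff]
  rw [this]
  exact isClosed_singleton.isZeroSet_preimage (ha.prodMk hb)

theorem FunctionallyFSigma.of_iUnion {ι : Type*} [Countable ι] [Nonempty ι] {A : ι → Set X}
    (hA : ∀ i, IsZeroSet (A i)) : FunctionallyFSigma (⋃ i, A i) := by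
  obtain ⟨e, he⟩ := exists_surjective_nat ι
  exact ⟨A ∘ e, fun n => hA (e n), (he.iUnion_comp A).symm⟩

theorem FunctionallyFSigma.inter {A B : Set X} (hA : FunctionallyFSigma A)
    (hB : FunctionallyFSigma B) : FunctionallyFSigma (A ∩ B) := by
  obtain ⟨Z, hZ, rfl⟩ := hA
  obtain ⟨Z', hZ', rfl⟩ := hB
  have : (⋃ l, Z l) ∩ ⋃ i, Z' i = ⋃ p : ℕ × ℕ, Z p.1 ∩ Z' p.2 := by
    rw [iUnion_inter_iUnion, iUnion_prod']
  rw [this]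
  exact .of_iUnion fun p => (hZ p.1).inter (hZ' p.2)

theorem IsCozeroSet.functionallyFSigma {U : Set X} (hU : IsCozeroSet U) :
    FunctionallyFSigma U := by
  obtain ⟨φ, hφ, hUφ⟩ := hU
  refine ⟨fun j => (fun x => |φ x|) ⁻¹' Ici (1 / (j + 1)),
    fun j => isClosed_Ici.isZeroSet_preimage hφ.abs, ?_⟩
  ext x
  have hxU : x ∈ U ↔ φ x ≠ 0 := by
    rw [← not_iff_not, not_not, ← mem_compl_iff, hUφ, mem_preimage, mem_singleton_iff]
  simp only [hxU, mem_iUnion, mem_preimage, mem_Ici]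
  refine ⟨fun hφx => ?_, fun ⟨j, hj⟩ hφx => ?_⟩
  · obtain ⟨j, hj⟩ := exists_nat_one_div_lt (abs_pos.2 hφx)
    exact ⟨j, hj.le⟩
  · rw [hφx, abs_zero] at hj
    exact (Nat.one_div_pos_of_nat.trans_le hj).false

end ZeroSets

section StronglyZeroDimensional

variable {X : Type*} [TopologicalSpace X]

theorem StronglyZeroDimensional.exists_isClopen_between (hX : StronglyZeroDimensional X)
    {φ : X → ℝ} (hφ : Continuous φ) {a b : ℝ} (hab : a < b) :
    ∃ W, IsClopen W ∧ {x | φ x ≤ a} ⊆ W ∧ W ⊆ {x | φ x < b} := by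
  have hsep : CompletelySeparatedSets {x | φ x ≤ a} {x | b ≤ φ x} := by
    refine ⟨fun x => max 0 (min ((φ x - a) / (b - a)) 1), by fun_prop,
      fun x => ⟨le_max_left _ _, max_le zero_le_one (min_le_right _ _)⟩,
      fun x (hx : φ x ≤ a) => ?_, fun x (hx : b ≤ φ x) => ?_⟩
    · have : (φ x - a) / (b - a) ≤ 0 := div_nonpos_of_nonpos_of_nonneg (by linarith) (by linarith)
      simp [this]
    · have : 1 ≤ (φ x - a) / (b - a) := (le_div_iff₀ (sub_pos.2 hab)).2 (by linarith)
      simp [this]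
  obtain ⟨W, hW, haW, hWb⟩ := hX _ _ hsep
  exact ⟨W, hW, haW, fun x hx => by simpa using hWb hx⟩

theorem StronglyZeroDimensional.exists_isClopen_of_disjoint (hX : StronglyZeroDimensional X)
    {A B : Set X} (hA : IsZeroSet A) (hB : IsZeroSet B) (hAB : Disjoint A B) :
    ∃ W, IsClopen W ∧ A ⊆ W ∧ Disjoint W B := by
  obtain ⟨a, ha, rfl⟩ := hA
  obtain ⟨b, hb, rfl⟩ := hB
  have hpos : ∀ x, 0 < |a x| + |b x| := by
    intro x
    rcases eq_or_ne (a x) 0 with hax | hax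
    · have hbx : b x ≠ 0 := fun hbx => disjoint_left.1 hAB hax hbx
      positivity
    · positivity
  -- the ratio is `0` on `A` and `1` on `B`
  obtain ⟨W, hW, hAW, hWB⟩ := hX.exists_isClopen_between
    (φ := fun x => |a x| / (|a x| + |b x|)) (by fun_prop (disch := exact fun x => (hpos x).ne'))
    zero_lt_one
  refine ⟨W, hW, fun x (hx : a x = 0) => hAW (by simp [hx]), disjoint_left.2 fun x hxW hxB => ?_⟩
  have hbx : b x = 0 := hxB
  have hlt : |a x| / (|a x| + |b x|) < 1 := hWB hxW
  rw [hbx, abs_zero, add_zero, div_self (by simpa [hbx] using (hpos x).ne')] at hlt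
  exact lt_irrefl _ hlt

theorem StronglyZeroDimensional.exists_antitone_isClopen (hX : StronglyZeroDimensional X)
    {Z : Set X} (hZ : IsZeroSet Z) {B : ℕ → Set X} (hB : ∀ m, IsZeroSet (B m))
    (hZB : ∀ m, Disjoint Z (B m)) :
    ∃ D : ℕ → Set X, (∀ k, IsClopen (D k)) ∧ Antitone D ∧ (∀ k, Z ⊆ D k) ∧
      ∀ m k, m ≤ k → Disjoint (D k) (B m) := by
  choose E hE hZE hEB using fun m => hX.exists_isClopen_of_disjoint hZ (hB m) (hZB m)
  refine ⟨fun k => ⋂ m ∈ Finset.Iic k, E m, fun k => isClopen_biInter_finset fun m _ => hE m,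
    fun k k' hkk' => biInter_subset_biInter_left (by simpa using Finset.Iic_subset_Iic.2 hkk'),
    fun k => subset_iInter₂ fun m _ => hZE m,
    fun m k hmk => (hEB m).mono_left (biInter_subset_of_mem (by simpa using hmk))⟩

end StronglyZeroDimensional

section DiscreteFamilies

variable {X Y : Type*} [TopologicalSpace X] {ι : Type*}

theorem IsDiscreteFamily.eq_of_mem {U : ι → Set X} (hU : IsDiscreteFamily U) {x : X} {i j : ι}
    (hi : x ∈ U i) (hj : x ∈ U j) : i = j := by
  obtain ⟨V, hV, hsub⟩ := hU x
  exact hsub ⟨x, hi, mem_of_mem_nhds hV⟩ ⟨x, hj, mem_of_mem_nhds hV⟩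

theorem IsDiscreteFamily.locallyFinite {U : ι → Set X} (hU : IsDiscreteFamily U) :
    LocallyFinite U := fun x =>
  let ⟨V, hV, hsub⟩ := hU x
  ⟨V, hV, hsub.finite⟩

theorem IsDiscreteFamily.preimage [TopologicalSpace Y] {U : ι → Set Y} (hU : IsDiscreteFamily U)
    {g : X → Y} (hg : Continuous g) : IsDiscreteFamily fun i => g ⁻¹' U i := by
  intro x
  obtain ⟨V, hV, hsub⟩ := hU (g x)
  refine ⟨g ⁻¹' V, hg.continuousAt.preimage_mem_nhds hV, fun i ⟨w, hwi, hwV⟩ j ⟨w', hwj, hwV'⟩ =>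
    hsub ⟨g w, hwi, hwV⟩ ⟨g w', hwj, hwV'⟩⟩

theorem IsDiscreteFamily.comp_injective {κ : Type*} {U : ι → Set X} (hU : IsDiscreteFamily U)
    {e : κ → ι} (he : Function.Injective e) : IsDiscreteFamily (U ∘ e) := fun x =>
  let ⟨V, hV, hsub⟩ := hU x
  ⟨V, hV, fun _ hi _ hj => he (hsub hi hj)⟩

theorem IsSFDFamily.isSFDSetFamily_range {A : ι → Set X} (hA : IsSFDFamily A) :
    IsSFDSetFamily (range A) := by
  obtain ⟨U, hUd, hUc, hAU⟩ := hA
  choose i hi using fun B : range A => B.2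
  refine ⟨U ∘ i, hUd.comp_injective fun B B' h => Subtype.ext ?_, fun B => hUc _, fun B => ?_⟩
  · rw [← hi B, ← hi B', h]
  · show closure (B : Set X) ⊆ U (i B)
    rw [← hi B]
    exact hAU (i B)

open Classical in
noncomputable def discretePiecewise (U : ι → Set X) (v : ι → Y) (d : Y) (x : X) : Y :=
  if h : ∃ i, x ∈ U i then v h.choose else d

theorem IsDiscreteFamily.discretePiecewise_eq {U : ι → Set X} (hU : IsDiscreteFamily U)
    (v : ι → Y) (d : Y) {x : X} {i : ι} (hx : x ∈ U i) : discretePiecewise U v d x = v i := by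
  have h : ∃ i, x ∈ U i := ⟨i, hx⟩
  rw [discretePiecewise, dif_pos h, hU.eq_of_mem h.choose_spec hx]

theorem IsDiscreteFamily.continuousAt_discretePiecewise [TopologicalSpace Y] {U : ι → Set X}
    (hU : IsDiscreteFamily U) (v : ι → Y) (d : Y) {x : X} {i : ι} (hUi : IsOpen (U i))
    (hx : x ∈ U i) : ContinuousAt (discretePiecewise U v d) x :=
  continuousAt_const.congr <| eventually_of_mem (hUi.mem_nhds hx) fun _ hy =>
    (hU.discretePiecewise_eq v d hy).symm

end DiscreteFamilies

section Bases

variable {X Y : Type*} [TopologicalSpace X] [TopologicalSpace Y]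

theorem IsBaseFor.exists_mem_subset {𝓑 : Set (Set X)} {f : X → Y} (h : IsBaseFor 𝓑 f)
    {V : Set Y} (hV : IsOpen V) {x : X} (hx : f x ∈ V) : ∃ B ∈ 𝓑, x ∈ B ∧ B ⊆ f ⁻¹' V := by
  obtain ⟨𝓢, h𝓢, hV𝓢⟩ := h V hV
  obtain ⟨B, hB, hxB⟩ : x ∈ ⋃₀ 𝓢 := hV𝓢 ▸ hx
  exact ⟨B, h𝓢 hB, hxB, hV𝓢 ▸ subset_sUnion_of_mem hB⟩

theorem isBaseFor_of_exists_mem_subset {𝓑 : Set (Set X)} {f : X → Y}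
    (h : ∀ V, IsOpen V → ∀ x, f x ∈ V → ∃ B ∈ 𝓑, x ∈ B ∧ B ⊆ f ⁻¹' V) : IsBaseFor 𝓑 f :=
  fun V hV => ⟨{B ∈ 𝓑 | B ⊆ f ⁻¹' V}, fun _ hB => hB.1,
    Subset.antisymm (fun x hx => let ⟨B, hB, hxB, hBV⟩ := h V hV x hx; ⟨B, ⟨hB, hBV⟩, hxB⟩)
      (sUnion_subset fun _ hB => hB.2)⟩

theorem memSigmaF_of_countable {ι : Type*} [Countable ι] [Nonempty ι] {f : X → Y}
    {𝓑 : ι → Set (Set X)} (h𝓑 : ∀ i, IsSFDSetFamily (𝓑 i)) (hbase : IsBaseFor (⋃ i, 𝓑 i) f) :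
    MemSigmaF f := by
  obtain ⟨e, he⟩ := exists_surjective_nat ι
  exact ⟨𝓑 ∘ e, fun n => h𝓑 (e n), by rwa [Function.comp_def, he.iUnion_comp]⟩

end Bases

theorem eventually_isLeast_setOf_mem {X : Type*} {O : ℕ → ℕ → Set X} (hO : ∀ p, Antitone (O p))
    {x : X} {p : ℕ} (hp : ∀ k, x ∈ O p k) (hmin : ∀ q < p, ¬∀ k, x ∈ O q k) :
    ∀ᶠ k in atTop, IsLeast {q | q ≤ k ∧ x ∈ O q k} p := by
  have hlate : ∀ᶠ k in atTop, ∀ q ∈ Iio p, x ∉ O q k := by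
    refine (finite_Iio p).eventually_all.2 fun q hq => ?_
    obtain ⟨K, hK⟩ := not_forall.1 (hmin q hq)
    filter_upwards [eventually_ge_atTop K] with k hk hxk using hK (hO q hk hxk)
  filter_upwards [hlate, eventually_ge_atTop p] with k hk hpk
  exact ⟨⟨hpk, hp k⟩, fun q ⟨_, hq⟩ => not_lt.1 fun hlt => hk q hlt hq⟩

section ClopenPatterns

variable {X Y : Type*} [TopologicalSpace X] [TopologicalSpace Y]

theorem IsClopen.eventually_mem_iff {C : Set X} (hC : IsClopen C) (x : X) :
    ∀ᶠ y in 𝓝 x, y ∈ C ↔ x ∈ C := by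
  by_cases hx : x ∈ C
  · filter_upwards [hC.isOpen.mem_nhds hx] with y hy using iff_of_true hy hx
  · filter_upwards [hC.compl.isOpen.mem_nhds hx] with y hy using iff_of_false hy hx

/-- A function that depends continuously on `x` once the membership pattern of `x` in the
clopen sets `C 0, …, C k` is fixed is continuous. -/
theorem continuous_of_isClopen_pattern {C : ℕ → Set X} (hC : ∀ p, IsClopen (C p)) (k : ℕ)
    {Ψ : Set ℕ → X → Y} (hΨ : ∀ x, ContinuousAt (Ψ {p | p ≤ k ∧ x ∈ C p}) x) :
    Continuous fun x => Ψ {p | p ≤ k ∧ x ∈ C p} x := by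
  refine continuous_iff_continuousAt.2 fun x => (hΨ x).congr ?_
  have : ∀ᶠ y in 𝓝 x, ∀ p ∈ Iic k, (y ∈ C p ↔ x ∈ C p) :=
    (finite_Iic k).eventually_all.2 fun p _ => (hC p).eventually_mem_iff x
  filter_upwards [this] with y hy
  congr 2
  ext p
  exact and_congr_right fun hp => (hy p hp).symm

/-- Gluing: at stage `k` take the value of `c p` for the first `p ≤ k` whose `k`-th clopen set
contains the point. -/
theorem exists_memB1_of_antitone_isClopen [Nonempty Y] {O : ℕ → ℕ → Set X}
    (hO : ∀ p k, IsClopen (O p k)) (hanti : ∀ p, Antitone (O p)) {c : ℕ → X → Y}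
    (hc : ∀ p, ∀ x ∈ O p 0, ContinuousAt (c p) x) (hcover : ∀ x, ∃ p, ∀ k, x ∈ O p k) :
    ∃ F : X → Y, MemB1 F ∧ ∀ x, ∃ p, (∀ k, x ∈ O p k) ∧ F x = c p x := by
  classical
  let Ψ : Set ℕ → X → Y := fun S =>
    if S.Nonempty then c (sInf S) else fun _ => Classical.arbitrary Y
  refine ⟨fun x => c (Nat.find (hcover x)) x,
    ⟨fun k x => Ψ {p | p ≤ k ∧ x ∈ O p k} x, fun k => ?_, fun x => ?_⟩,
    fun x => ⟨_, Nat.find_spec (hcover x), rfl⟩⟩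
  · refine continuous_of_isClopen_pattern (fun p => hO p k) k fun x => ?_
    by_cases hS : {p | p ≤ k ∧ x ∈ O p k}.Nonempty
    · simp only [Ψ, if_pos hS]
      exact hc _ x (hanti _ (Nat.zero_le k) (Nat.sInf_mem hS).2)
    · simp only [Ψ, if_neg hS]
      exact continuousAt_const
  · refine tendsto_const_nhds.congr' ?_
    filter_upwards [eventually_isLeast_setOf_mem hanti (Nat.find_spec (hcover x))
      fun q => Nat.find_min (hcover x)] with k hk
    simp only [Ψ, if_pos hk.nonempty, hk.csInf_eq]

end ClopenPatterns

theorem StronglyZeroDimensional.exists_antitone_isClopen_of_isDiscreteFamily {X : Type*}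
    [TopologicalSpace X] (hX : StronglyZeroDimensional X) {ι : Type*} {U Z C : ι → Set X}
    (hU : IsDiscreteFamily U) (hUc : ∀ i, IsCozeroSet (U i)) (hZ : ∀ i, IsZeroSet (Z i))
    (hC : ∀ i, FunctionallyFSigma (C i)) (hZU : ∀ i, Z i ⊆ U i)
    (hZC : ∀ i, Disjoint (Z i) (C i)) :
    ∃ O : ℕ → Set X, (∀ k, IsClopen (O k)) ∧ Antitone O ∧ (∀ i k, Z i ⊆ O k) ∧
      (∀ k, O k ⊆ ⋃ i, U i) ∧ ∀ x, (∀ k, x ∈ O k) → ∃ i, x ∈ U i ∧ x ∉ C i := by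
  choose Cz hCz hCeq using hC
  have hdisj : ∀ i m, Disjoint (Z i) ((U i)ᶜ ∪ Cz i m) := fun i m =>
    disjoint_union_right.2 ⟨disjoint_compl_right_iff_subset.2 (hZU i),
      (hZC i).mono_right (hCeq i ▸ subset_iUnion _ m)⟩
  choose D hDc hDa hZD hDbad using fun i =>
    hX.exists_antitone_isClopen (hZ i) (fun m => (hUc i).union (hCz i m)) (hdisj i)
  have hDU : ∀ i k, D i k ⊆ U i := fun i k =>
    disjoint_compl_right_iff_subset.1 (disjoint_union_right.1 (hDbad i 0 k (Nat.zero_le k))).1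
  refine ⟨fun k => ⋃ i, D i k,
    fun k => ⟨(hU.locallyFinite.subset (hDU · k)).isClosed_iUnion fun i => (hDc i k).isClosed,
      isOpen_iUnion fun i => (hDc i k).isOpen⟩,
    fun k k' h => iUnion_mono fun i => hDa i h,
    fun i k => (hZD i k).trans (subset_iUnion (D · k) i),
    fun k => iUnion_mono fun i => hDU i k, fun x hx => ?_⟩
  obtain ⟨i, hi⟩ := mem_iUnion.1 (hx 0)
  have hxD : ∀ k, x ∈ D i k := fun k => by
    obtain ⟨j, hj⟩ := mem_iUnion.1 (hx k)
    rwa [hU.eq_of_mem (hDU i 0 hi) (hDU j k hj)]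
  refine ⟨i, hDU i 0 hi, fun hxC => ?_⟩
  obtain ⟨m, hm⟩ := mem_iUnion.1 (hCeq i ▸ hxC)
  exact disjoint_left.1 (hDbad i m m le_rfl) (hxD m) (Or.inr hm)

section MetricShrinking

variable {Y : Type*} [PseudoMetricSpace Y]

theorem compl_thickening_compl_subset (V : Set Y) (j : ℕ) :
    (thickening (1 / (j + 1)) Vᶜ)ᶜ ⊆ V :=
  compl_subset_comm.1 (self_subset_thickening Nat.one_div_pos_of_nat _)

theorem IsOpen.exists_compl_thickening_compl_mem_nhds {V : Set Y} (hV : IsOpen V) {y : Y}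
    (hy : y ∈ V) : ∃ j : ℕ, (thickening (1 / (j + 1)) Vᶜ)ᶜ ∈ 𝓝 y := by
  obtain ⟨r, hr, hball⟩ := Metric.isOpen_iff.1 hV y hy
  obtain ⟨j, hj⟩ := exists_nat_one_div_lt (half_pos hr)
  refine ⟨j, mem_of_superset (ball_mem_nhds y (by positivity : (0 : ℝ) < 1 / (j + 1)))
    fun z hz hzV => ?_⟩
  obtain ⟨w, hwV, hzw⟩ := mem_thickening_iff.1 hzV
  refine hwV (hball (mem_ball.2 ?_))
  linarith [dist_triangle w z y, dist_comm w z, mem_ball.1 hz]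

end MetricShrinking

section TailSets

variable {X Y : Type*} [TopologicalSpace X] [PseudoMetricSpace Y]

theorem isZeroSet_setOf_forall_ge_mem {g : ℕ → X → Y} (hg : ∀ k, Continuous (g k)) {K : Set Y}
    (hK : IsClosed K) (N : ℕ) :
    IsZeroSet {x | ∀ k ≥ N, g k x ∈ K} := by
  have : IsClosed {y : ℕ → Y | ∀ k ≥ N, y k ∈ K} := by
    simp only [ofPred_forall]
    exact isClosed_iInter fun k => isClosed_iInter fun _ => hK.preimage (continuous_apply k)
  exact this.isZeroSet_preimage (continuous_pi hg)

theorem MemB1.memK1 {f : X → Y} (hf : MemB1 f) : MemK1 f := by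
  obtain ⟨g, hg, hgf⟩ := hf
  intro V hV
  have hK : ∀ j : ℕ, IsClosed (thickening (1 / (j + 1)) Vᶜ)ᶜ := fun j =>
    isOpen_thickening.isClosed_compl
  have hfV :
      f ⁻¹' V = ⋃ p : ℕ × ℕ, {x | ∀ k ≥ p.2, g k x ∈ (thickening (1 / (p.1 + 1)) Vᶜ)ᶜ} := by
    ext x
    simp only [mem_preimage, mem_iUnion, Prod.exists]
    constructor
    · intro hx
      obtain ⟨j, hj⟩ := hV.exists_compl_thickening_compl_mem_nhds hx
      obtain ⟨N, hN⟩ := eventually_atTop.1 ((hgf x).eventually hj)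
      exact ⟨j, N, hN⟩
    · rintro ⟨j, N, hx⟩
      exact compl_thickening_compl_subset V j
        ((hK j).mem_of_tendsto (hgf x) (eventually_atTop.2 ⟨N, hx⟩))
  rw [hfV]
  exact .of_iUnion fun p => isZeroSet_setOf_forall_ge_mem hg (hK p.1) p.2

end TailSets

section Stone

variable {Y : Type*} [PseudoMetricSpace Y]

theorem exists_isDiscreteFamily_refinement {ι : Type*} (s : ι → Set Y) (hs : ∀ i, IsOpen (s i))
    (hcov : ∀ y, ∃ i, y ∈ s i) :
    ∃ V : ℕ → ι → Set Y, (∀ n i, IsOpen (V n i)) ∧ (∀ n, IsDiscreteFamily (V n)) ∧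
      (∀ n i, V n i ⊆ s i) ∧ ∀ y, ∃ n i, y ∈ V n i := by
  obtain ⟨_, _⟩ := exists_wellFoundedLT ι
  let ind : Y → ι := fun y => wellFounded_lt.min {i | y ∈ s i} (hcov y)
  have ind_le : ∀ {y i}, y ∈ s i → ind y ≤ i := fun {y _} h =>
    not_lt.1 (wellFounded_lt.not_lt_min {i | y ∈ s i} h)
  let δ : ℕ → ℝ := fun n => 1 / (n + 1)
  have hδ : ∀ n, 0 < δ n := fun n => Nat.one_div_pos_of_nat
  refine ⟨fun n i => ⋃ (c) (_ : ind c = i ∧ ball c (3 * δ n) ⊆ s i), ball c (δ n),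
    fun n i => isOpen_biUnion fun _ _ => isOpen_ball, fun n z => ?_,
    fun n i => iUnion₂_subset fun c hc => (ball_subset_ball (by linarith [hδ n])).trans hc.2,
    fun y => ?_⟩
  -- Two `δ n`-balls of `V n` meeting `ball z (δ n / 2)` have centres `3 * δ n`-close, so each
  -- centre lies in the cover member of the other and their first indices coincide.
  · refine ⟨ball z (δ n / 2), ball_mem_nhds z (half_pos (hδ n)), ?_⟩
    rintro i ⟨p, hp, hpz⟩ j ⟨q, hq, hqz⟩
    simp only [mem_iUnion] at hp hq
    obtain ⟨c, ⟨rfl, hc⟩, hpc⟩ := hp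
    obtain ⟨c', ⟨rfl, hc'⟩, hqc'⟩ := hq
    have hcc' : dist c c' < 3 * δ n := by
      linarith [dist_triangle4 c p q c', dist_triangle p z q, dist_comm p c, dist_comm q z,
        mem_ball.1 hpc, mem_ball.1 hqc', mem_ball.1 hpz, mem_ball.1 hqz]
    exact le_antisymm (ind_le (hc' (mem_ball.2 hcc')))
      (ind_le (hc (mem_ball.2 (by rwa [dist_comm]))))
  · obtain ⟨r, hr, hball⟩ := Metric.isOpen_iff.1 (hs (ind y)) y
      (wellFounded_lt.min_mem {i | y ∈ s i} (hcov y))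
    obtain ⟨n, hn⟩ := exists_nat_one_div_lt (by positivity : 0 < r / 3)
    refine ⟨n, ind y, mem_iUnion₂.2 ⟨y, ⟨rfl, (ball_subset_ball ?_).trans hball⟩,
      mem_ball_self (hδ n)⟩⟩
    linarith

theorem exists_sigmaDiscrete_basis (Y : Type*) [PseudoMetricSpace Y] :
    ∃ V : ℕ → Y → Set Y, (∀ n s, IsOpen (V n s)) ∧ (∀ n, IsDiscreteFamily (V n)) ∧
      ∀ y, ∀ W ∈ 𝓝 y, ∃ n s, y ∈ V n s ∧ V n s ⊆ W := by
  choose V hVo hVd hVs hVc using fun m : ℕ =>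
    exists_isDiscreteFamily_refinement (fun c : Y => ball c (1 / (m + 1))) (fun _ => isOpen_ball)
      fun y => ⟨y, mem_ball_self Nat.one_div_pos_of_nat⟩
  refine ⟨fun n => V n.unpair.1 n.unpair.2, fun n => hVo _ _, fun n => hVd _ _,
    fun y W hW => ?_⟩
  obtain ⟨r, hr, hball⟩ := Metric.mem_nhds_iff.1 hW
  obtain ⟨m, hm⟩ := exists_nat_one_div_lt (half_pos hr)
  obtain ⟨n, c, hy⟩ := hVc m y
  refine ⟨Nat.pair m n, c, by simpa using hy, fun z hz => hball (mem_ball.2 ?_)⟩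
  simp only [Nat.unpair_pair] at hz
  linarith [dist_triangle_right z y c, mem_ball.1 (hVs m n c hz), mem_ball.1 (hVs m n c hy)]

end Stone

theorem MemB1.memSigmaF {X Y : Type*} [TopologicalSpace X] [PseudoMetricSpace Y] {f : X → Y}
    (hf : MemB1 f) : MemSigmaF f := by
  obtain ⟨g, hg, hgf⟩ := hf
  obtain ⟨V, hVo, hVd, hVbasis⟩ := exists_sigmaDiscrete_basis Y
  have hK : ∀ (j : ℕ) (W : Set Y), IsClosed (thickening (1 / (j + 1)) Wᶜ)ᶜ := fun j W =>
    isOpen_thickening.isClosed_compl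
  let A : ℕ × ℕ × ℕ → Y → Set X := fun w s =>
    {x | ∀ k ≥ w.2.2, g k x ∈ (thickening (1 / (w.2.1 + 1)) (V w.1 s)ᶜ)ᶜ}
  have hAV : ∀ w s, A w s ⊆ g w.2.2 ⁻¹' V w.1 s := fun w s x hx =>
    compl_thickening_compl_subset (V w.1 s) w.2.1 (hx _ le_rfl)
  have hA : ∀ w, IsSFDFamily (A w) := fun w =>
    ⟨fun s => g w.2.2 ⁻¹' V w.1 s, (hVd w.1).preimage (hg _),
      fun s => (hVo _ _).isCozeroSet_preimage (hg _),
      fun s => (isZeroSet_setOf_forall_ge_mem hg (hK _ _) _).isClosed.closure_subset.trans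
        (hAV w s)⟩
  refine memSigmaF_of_countable (fun w => (hA w).isSFDSetFamily_range)
    (isBaseFor_of_exists_mem_subset fun W hW x hx => ?_)
  obtain ⟨n, s, hxV, hVW⟩ := hVbasis (f x) W (hW.mem_nhds hx)
  obtain ⟨j, hj⟩ := (hVo n s).exists_compl_thickening_compl_mem_nhds hxV
  obtain ⟨N, hN⟩ := eventually_atTop.1 ((hgf x).eventually hj)
  refine ⟨A (n, j, N) s, mem_iUnion.2 ⟨_, mem_range_self s⟩, hN, fun x' hx' => hVW ?_⟩
  exact compl_thickening_compl_subset _ _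
    ((hK _ _).mem_of_tendsto (hgf x') (eventually_atTop.2 ⟨N, hx'⟩))

theorem StronglyZeroDimensional.exists_antitone_isClopen_dist_le {X Y ι : Type*}
    [TopologicalSpace X] [PseudoMetricSpace Y] (hX : StronglyZeroDimensional X) {f : X → Y}
    (hK : MemK1 f) {U : ι → Set X} (hU : IsDiscreteFamily U) (hUc : ∀ i, IsCozeroSet (U i))
    (y : ι → Y) (ε : ℝ) :
    ∃ O : ℕ → ℕ → Set X, (∀ l k, IsClopen (O l k)) ∧ (∀ l, Antitone (O l)) ∧
      (∀ l k, O l k ⊆ ⋃ i, U i) ∧ (∀ i, ∀ x ∈ U i, dist (f x) (y i) < ε → ∃ l, ∀ k, x ∈ O l k) ∧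
      ∀ l x, (∀ k, x ∈ O l k) → ∃ i, x ∈ U i ∧ dist (f x) (y i) ≤ ε := by
  choose Z hZ hUZ using fun i =>
    (hUc i).functionallyFSigma.inter (hK _ (isOpen_ball (x := y i) (ε := ε)))
  have hZU : ∀ i l, Z i l ⊆ U i ∩ f ⁻¹' ball (y i) ε := fun i l => hUZ i ▸ subset_iUnion (Z i) l
  choose O hOc hOa hZO hOU hOf using fun l => hX.exists_antitone_isClopen_of_isDiscreteFamily
    hU hUc (fun i => hZ i l) (fun i => hK _ isClosed_closedBall.isOpen_compl)
    (fun i => (hZU i l).trans inter_subset_left)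
    (fun i => disjoint_compl_right_iff_subset.2 <| (hZU i l).trans <|
      inter_subset_right.trans (preimage_mono ball_subset_closedBall))
  refine ⟨O, hOc, hOa, hOU, fun i x hxU hxf => ?_, fun l x hx => ?_⟩
  · obtain ⟨l, hl⟩ := mem_iUnion.1 (hUZ i ▸ ⟨hxU, mem_ball.2 hxf⟩ : x ∈ ⋃ l, Z i l)
    exact ⟨l, fun k => hZO l i k hl⟩
  · obtain ⟨i, hxU, hxC⟩ := hOf l x hx
    exact ⟨i, hxU, by simpa using hxC⟩

theorem StronglyZeroDimensional.exists_memB1_dist_le {X Y : Type*} [TopologicalSpace X]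
    [PseudoMetricSpace Y] [Nonempty Y] (hX : StronglyZeroDimensional X) {f : X → Y}
    (hK : MemK1 f) (hS : MemSigmaF f) {ε : ℝ} (hε : 0 < ε) :
    ∃ F : X → Y, MemB1 F ∧ ∀ x, dist (F x) (f x) ≤ ε := by
  obtain ⟨𝓑, hSFD, hbase⟩ := hS
  choose U hUd hUc hAU using hSFD
  let y : ∀ n, 𝓑 n → Y := fun n A => Classical.epsilon fun y => (A : Set X) ⊆ f ⁻¹' ball y ε
  choose O hOc hOa hOU hcover hOf using fun n =>
    hX.exists_antitone_isClopen_dist_le hK (hUd n) (hUc n) (y n) ε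
  obtain ⟨F, hF, hFf⟩ := exists_memB1_of_antitone_isClopen (O := fun p => O p.unpair.1 p.unpair.2)
    (fun p => hOc _ _) (fun p => hOa _ _)
    (c := fun p => discretePiecewise (U p.unpair.1) (y p.unpair.1) (Classical.arbitrary Y))
    (fun p x hx => by
      obtain ⟨A, hA⟩ := mem_iUnion.1 (hOU _ _ 0 hx)
      exact (hUd _).continuousAt_discretePiecewise _ _ (hUc _ A).isOpen hA)
    (fun x => by
      obtain ⟨B, hB𝓑, hxB, hBf⟩ := hbase.exists_mem_subset isOpen_ball (mem_ball_self hε)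
      obtain ⟨n, hn⟩ := mem_iUnion.1 hB𝓑
      let A : 𝓑 n := ⟨B, hn⟩
      have hyA : (A : Set X) ⊆ f ⁻¹' ball (y n A) ε :=
        Classical.epsilon_spec (p := fun y => (A : Set X) ⊆ f ⁻¹' ball y ε) ⟨f x, hBf⟩
      obtain ⟨l, hl⟩ := hcover n A x (hAU n A (subset_closure hxB)) (mem_ball.1 (hyA hxB))
      exact ⟨Nat.pair n l, by simpa using hl⟩)
  refine ⟨F, hF, fun x => ?_⟩
  obtain ⟨p, hp, hFp⟩ := hFf x
  obtain ⟨A, hxA, hfA⟩ := hOf _ _ x hp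
  rw [hFp, (hUd _).discretePiecewise_eq _ _ hxA, dist_comm]
  exact hfA

theorem dist_le_of_dist_succ_le_geometric {Y : Type*} [PseudoMetricSpace Y] {u : ℕ → Y}
    {M m : ℕ} (hMm : M ≤ m) {C : ℝ} (hC : 0 ≤ C)
    (h : ∀ i, M ≤ i → i < m → dist (u i) (u (i + 1)) ≤ C * 2⁻¹ ^ i) :
    dist (u M) (u m) ≤ 2 * C * 2⁻¹ ^ M :=
  calc dist (u M) (u m) ≤ ∑ i ∈ Finset.Ico M m, C * 2⁻¹ ^ i :=
        dist_le_Ico_sum_of_dist_le hMm fun hi hi' => h _ hi hi'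
    _ = C * ∑ i ∈ Finset.Ico M m, (2⁻¹ : ℝ) ^ i := (Finset.mul_sum ..).symm
    _ ≤ C * (2⁻¹ ^ M / (1 - 2⁻¹)) := by
        gcongr
        exact geom_sum_Ico_le_of_lt_one (by norm_num) (by norm_num)
    _ = 2 * C * 2⁻¹ ^ M := by ring

theorem StronglyZeroDimensional.memB1_of_forall_dist_le {X Y : Type*} [TopologicalSpace X]
    [PseudoMetricSpace Y] (hX : StronglyZeroDimensional X) {f : X → Y}
    (hf : ∀ ε > 0, ∃ F : X → Y, MemB1 F ∧ ∀ x, dist (F x) (f x) ≤ ε) : MemB1 f := by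
  choose F hF hFf using fun i : ℕ => hf ((2 : ℝ)⁻¹ ^ i) (by positivity)
  choose g hg hgF using hF
  choose T hT hT3 hT4 using fun i k => hX.exists_isClopen_between
    ((hg i k).dist (hg (i + 1) k)) (by linarith [pow_pos (by norm_num : (0 : ℝ) < 2⁻¹) i] :
      3 * (2 : ℝ)⁻¹ ^ i < 4 * 2⁻¹ ^ i)
  -- at stage `k`, follow the chain `g 0 k, g 1 k, …` as long as consecutive terms stay close
  let idx : ℕ → X → ℕ := fun k x => sSup {m | m ≤ k ∧ x ∈ ⋂ i ∈ Finset.range m, T i k}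
  refine ⟨fun k x => g (idx k x) k x, fun k => continuous_of_isClopen_pattern
    (C := fun m => ⋂ i ∈ Finset.range m, T i k) (Ψ := fun S => g (sSup S) k)
    (fun m => isClopen_biInter_finset fun i _ => hT i k) k fun x => (hg _ k).continuousAt,
    fun x => Metric.tendsto_nhds.2 fun ε hε => ?_⟩
  obtain ⟨M, hM⟩ := exists_pow_lt_of_lt_one (by positivity : 0 < ε / 10)
    (by norm_num : (2 : ℝ)⁻¹ < 1)
  have hclose : ∀ᶠ k in atTop, ∀ i ∈ Iio M, x ∈ T i k := by
    refine (finite_Iio M).eventually_all.2 fun i _ => ?_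
    have hFi : dist (F i x) (F (i + 1) x) < 3 * 2⁻¹ ^ i := by
      linarith [dist_triangle_right (F i x) (F (i + 1) x) (f x), hFf i x, hFf (i + 1) x,
        pow_succ (2 : ℝ)⁻¹ i, pow_pos (by norm_num : (0 : ℝ) < 2⁻¹) i]
    filter_upwards [((hgF i x).dist (hgF (i + 1) x)).eventually (gt_mem_nhds hFi)] with k hk
    exact hT3 i k hk.le
  filter_upwards [hclose,
    (hgF M x).eventually (ball_mem_nhds _ (by positivity : (0 : ℝ) < 2⁻¹ ^ M)),
    eventually_ge_atTop M] with k hTk hgM hMk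
  let S := {m | m ≤ k ∧ x ∈ ⋂ i ∈ Finset.range m, T i k}
  have hbdd : BddAbove S := ⟨k, fun m hm => hm.1⟩
  have hMidx : M ≤ idx k x := le_csSup hbdd ⟨hMk, by simpa using hTk⟩
  have hidx : x ∈ ⋂ i ∈ Finset.range (idx k x), T i k :=
    (Nat.sSup_mem (s := S) ⟨0, Nat.zero_le k, by simp⟩ hbdd).2
  have hchain := dist_le_of_dist_succ_le_geometric (u := fun i => g i k x) hMidx
    (C := 4) (by norm_num) fun i _ hi =>
      le_of_lt (hT4 i k (mem_iInter₂.1 hidx i (Finset.mem_range.2 hi)))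
  calc dist (g (idx k x) k x) (f x)
      ≤ dist (g M k x) (g (idx k x) k x) + dist (g M k x) (F M x) + dist (F M x) (f x) := by
        linarith [dist_triangle4 (g (idx k x) k x) (g M k x) (F M x) (f x),
          dist_comm (g M k x) (g (idx k x) k x)]
    _ < ε := by linarith [mem_ball.1 hgM, hFf M x]

theorem stmt11 {X Y : Type*} [TopologicalSpace X] [TopologicalSpace Y]
    [TopologicalSpace.MetrizableSpace Y] (hX : StronglyZeroDimensional X) :
    ∀ f : X → Y, (MemK1 f ∧ MemSigmaF f) ↔ MemB1 f := by
  let : MetricSpace Y := TopologicalSpace.metrizableSpaceMetric Y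
  intro f
  refine ⟨fun ⟨hK, hS⟩ => ?_, fun hf => ⟨hf.memK1, hf.memSigmaF⟩⟩
  rcases isEmpty_or_nonempty X with hX₀ | ⟨⟨x₀⟩⟩
  · exact ⟨fun _ => f, fun _ => continuous_of_const isEmptyElim, isEmptyElim⟩
  · have : Nonempty Y := ⟨f x₀⟩
    exact hX.memB1_of_forall_dist_le fun ε hε => hX.exists_memB1_dist_le hK hS hε
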